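/- There exists a finite constant C, depending only on d, such that for all n, all choices of the partition parameter N_2 ∈ ℕ*, and all x_1, x_2 ∈ [0, n^{1/d}]^d, ∫_{[0, n^{1/d}]^d} [1/(1 + |x_1 − x|^{d+1})] · [1/(1 + |x_2 − x|^{d+1})] · 1_{C(x) ≠ C(x_1)} · 1_{C(x) ≠ C(x_2)} dx ≤ C · f(D_Δ(x_1, x_2)) / (1 + |x_1 − x_2|^{d+1}). -/

import Mathlib

open MeasureTheory Filter
open scoped ENNReal Classical

noncomputable section

/-- `x` and `y` lie in the same cell of the partition of the cube `[0, L]^d` into `N^d`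
congruent subcubes (products of the intervals `[(i−1)L/N, iL/N)`, `i = 1, …, N`, the last
interval being closed on the right). Points outside the cube lie in no cell. -/
def sameCell (d : ℕ) (L : ℝ) (N : ℕ) (x y : Fin d → ℝ) : Prop :=
  x ∈ Set.Icc (0 : Fin d → ℝ) (fun _ => L) ∧ y ∈ Set.Icc (0 : Fin d → ℝ) (fun _ => L) ∧
    ∀ i, min ((N : ℤ) - 1) ⌊x i * N / L⌋ = min ((N : ℤ) - 1) ⌊y i * N / L⌋

/-- `f(T) = ∫_{ℝ^d ∖ [−T,T]^d} 1/(1+|t|^{d+1}) dt` (max-norm on `Fin d → ℝ`). -/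
def fTail (d : ℕ) (T : ℝ) : ℝ :=
  ∫ t in (Set.Icc (fun _ => -T) (fun _ : Fin d => T))ᶜ, 1 / (1 + ‖t‖ ^ (d + 1))

/-- `D_Δ(x)`: the distance from `x` to the complement of its cell `C(x)`. -/
def cellDist (d : ℕ) (L : ℝ) (N : ℕ) (x : Fin d → ℝ) : ℝ :=
  Metric.infDist x {y | ¬ sameCell d L N x y}

/-! Since `‖x₁ - x₂‖ ≤ 2 max ‖x₁ - x‖ ‖x₂ - x‖`, the smaller of the two kernel factors at `x`
is at most `2^(d+1) / (1 + ‖x₁ - x₂‖^(d+1))`, and a product of two nonnegative numbers is at most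
the bound on the smaller one times their sum. So the integral is at most that constant times the
sum of the integrals of the two kernels `1 / (1 + ‖x_j - x‖^(d+1))` restricted to the complement of
the cell of `x_j`. That complement lies outside the ball of radius `D_Δ(x_j)` around `x_j`, hence
each such integral is at most `f(D_Δ(x_j)) ≤ f(D_Δ(x₁, x₂))`, `f` being antitone. -/

open Metric

lemma one_add_pow_le_two_pow_mul {a : ℝ} (ha : 0 ≤ a) (m : ℕ) :
    (1 + a) ^ m ≤ 2 ^ m * (1 + a ^ m) := by
  calc (1 + a) ^ m ≤ 2 ^ (m - 1) * (1 ^ m + a ^ m) := add_pow_le zero_le_one ha m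
    _ ≤ 2 ^ m * (1 + a ^ m) := by
      rw [one_pow]
      gcongr
      · norm_num
      · omega

lemma one_div_one_add_pow_le_of_le_two_mul {r b : ℝ} (hr : 0 ≤ r) (hrb : r ≤ 2 * b) (m : ℕ) :
    1 / (1 + b ^ m) ≤ 2 ^ m * (1 / (1 + r ^ m)) := by
  have hb : 0 ≤ b := by linarith
  rw [mul_one_div, div_le_div_iff₀ (by positivity) (by positivity), one_mul]
  calc 1 + r ^ m ≤ 1 + (2 * b) ^ m := by gcongr
    _ ≤ 2 ^ m * (1 + b ^ m) := by
      rw [mul_pow]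
      nlinarith [one_le_pow₀ (M₀ := ℝ) (a := 2) (by norm_num) (n := m), pow_nonneg hb m]

lemma min_one_div_one_add_norm_pow_le {E : Type*} [SeminormedAddCommGroup E] (x₁ x₂ x : E)
    (m : ℕ) :
    min (1 / (1 + ‖x₁ - x‖ ^ m)) (1 / (1 + ‖x₂ - x‖ ^ m)) ≤
      2 ^ m * (1 / (1 + ‖x₁ - x₂‖ ^ m)) := by
  have htri : ‖x₁ - x₂‖ ≤ ‖x₁ - x‖ + ‖x₂ - x‖ := by
    simpa [norm_sub_rev x₂ x] using norm_sub_le_norm_sub_add_norm_sub x₁ x x₂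
  rcases le_total ‖x₁ - x‖ ‖x₂ - x‖ with h | h
  · exact (min_le_right _ _).trans
      (one_div_one_add_pow_le_of_le_two_mul (norm_nonneg _) (by linarith) m)
  · exact (min_le_left _ _).trans
      (one_div_one_add_pow_le_of_le_two_mul (norm_nonneg _) (by linarith) m)

lemma mul_le_mul_add_of_min_le {a b c : ℝ} (ha : 0 ≤ a) (hb : 0 ≤ b) (h : min a b ≤ c) :
    a * b ≤ c * (a + b) := by
  rcases le_total a b with hab | hab
  · rw [min_eq_left hab] at h; nlinarith
  · rw [min_eq_right hab] at h; nlinarith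

lemma integral_mul_le_mul_integral_add_of_min_le {α : Type*} [MeasurableSpace α] {μ : Measure α}
    {f g : α → ℝ} {c : ℝ} (hf : Integrable f μ) (hg : Integrable g μ) (hf0 : 0 ≤ f) (hg0 : 0 ≤ g)
    (h : ∀ x, min (f x) (g x) ≤ c) :
    ∫ x, f x * g x ∂μ ≤ c * ((∫ x, f x ∂μ) + ∫ x, g x ∂μ) := by
  rw [← integral_add hf hg, ← integral_const_mul]
  exact integral_mono_of_nonneg (.of_forall fun x => mul_nonneg (hf0 x) (hg0 x))
    ((hf.add hg).const_mul c) (.of_forall fun x => mul_le_mul_add_of_min_le (hf0 x) (hg0 x) (h x))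

section HaarMeasure

variable {E : Type*} [NormedAddCommGroup E] [NormedSpace ℝ E] [FiniteDimensional ℝ E]
  [MeasurableSpace E] [BorelSpace E] (μ : Measure E) [μ.IsAddHaarMeasure]

lemma integrable_one_div_one_add_norm_pow {m : ℕ} (hm : Module.finrank ℝ E < m) :
    Integrable (fun x : E => 1 / (1 + ‖x‖ ^ m)) μ := by
  have hbracket : Integrable (fun x : E => (1 + ‖x‖) ^ (-(m : ℝ))) μ :=
    integrable_one_add_norm (by exact_mod_cast hm)
  refine (hbracket.const_mul (2 ^ m)).mono'
    (continuous_const.div (by fun_prop) fun x => by positivity).aestronglyMeasurable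
    (.of_forall fun x => ?_)
  have h1x : 0 < 1 + ‖x‖ := by positivity
  rw [Real.norm_of_nonneg (by positivity), Real.rpow_neg h1x.le, Real.rpow_natCast,
    ← div_eq_mul_inv, div_le_div_iff₀ (by positivity) (by positivity), one_mul]
  exact one_add_pow_le_two_pow_mul (norm_nonneg x) m

variable [Nontrivial E] [μ.IsNegInvariant]

lemma setIntegral_comp_sub_le_of_le_dist {g : E → ℝ} (hg : Integrable g μ) (hg0 : 0 ≤ g)
    (x₀ : E) {S : Set E} {D : ℝ} (hD : ∀ y ∈ S, D ≤ dist x₀ y) :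
    ∫ x in S, g (x₀ - x) ∂μ ≤ ∫ t in (closedBall 0 D)ᶜ, g t ∂μ := by
  have hS : S ≤ᵐ[μ] (closedBall x₀ D)ᶜ := by
    filter_upwards [measure_eq_zero_iff_ae_notMem.mp (Measure.addHaar_sphere μ x₀ D)]
      with x hx hxS
    exact fun hxB => hx (mem_sphere'.mpr (le_antisymm (mem_closedBall'.mp hxB) (hD x hxS)))
  calc ∫ x in S, g (x₀ - x) ∂μ ≤ ∫ x in (closedBall x₀ D)ᶜ, g (x₀ - x) ∂μ :=
        setIntegral_mono_set (hg.comp_sub_left x₀).integrableOn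
          (.of_forall fun x => hg0 (x₀ - x)) hS
    _ = ∫ x, (closedBall 0 D)ᶜ.indicator g (x₀ - x) ∂μ := by
        rw [← integral_indicator measurableSet_closedBall.compl]
        congr 1 with x
        simp [Set.indicator_apply, dist_eq_norm, norm_sub_rev]
    _ = ∫ t in (closedBall 0 D)ᶜ, g t ∂μ := by
        rw [integral_sub_left_eq_self, integral_indicator measurableSet_closedBall.compl]

end HaarMeasure

lemma Icc_neg_const_eq_closedBall {ι : Type*} [Fintype ι] {T : ℝ} (hT : 0 ≤ T) :
    Set.Icc (fun _ : ι => -T) (fun _ => T) = closedBall 0 T := by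
  rw [closedBall_pi _ hT, ← Set.pi_univ_Icc]
  simp [Real.closedBall_zero_eq_Icc]

lemma fTail_eq_setIntegral_compl_closedBall (d : ℕ) {T : ℝ} (hT : 0 ≤ T) :
    fTail d T = ∫ t in (closedBall (0 : Fin d → ℝ) T)ᶜ, 1 / (1 + ‖t‖ ^ (d + 1)) := by
  rw [fTail, Icc_neg_const_eq_closedBall hT]

lemma fTail_antitone (d : ℕ) : Antitone (fTail d) := fun S T hST =>
  setIntegral_mono_set
    (integrable_one_div_one_add_norm_pow volume (by simp)).integrableOn
    (.of_forall fun t => by positivity)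
    (Set.compl_subset_compl.mpr (Set.Icc_subset_Icc (fun _ => by simpa) fun _ => hST)).eventuallyLE

section Cells

variable {d : ℕ} {L : ℝ} {N : ℕ}

lemma sameCell_symm {x y : Fin d → ℝ} (h : sameCell d L N x y) : sameCell d L N y x :=
  ⟨h.2.1, h.1, fun i => (h.2.2 i).symm⟩

lemma measurableSet_sameCell (y : Fin d → ℝ) :
    MeasurableSet {x : Fin d → ℝ | sameCell d L N x y} := by
  have hcoord : ∀ i, Measurable fun x : Fin d → ℝ => min ((N : ℤ) - 1) ⌊x i * N / L⌋ :=
    fun i => measurable_const.min (((measurable_pi_apply i).mul_const _).div_const _).floor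
  simp only [sameCell, Set.ofPred_and, Set.ofPred_forall]
  exact measurableSet_Icc.inter
    ((MeasurableSet.const _).inter (.iInter fun i => hcoord i (measurableSet_singleton _)))

lemma cellDist_le_dist {x y : Fin d → ℝ} (h : ¬ sameCell d L N y x) :
    cellDist d L N x ≤ dist x y :=
  infDist_le_dist_of_mem (mt sameCell_symm h)

lemma setIntegral_not_sameCell_le_fTail (hd : 0 < d) (x₀ : Fin d → ℝ) :
    ∫ x in {x | ¬ sameCell d L N x x₀}, 1 / (1 + ‖x₀ - x‖ ^ (d + 1)) ≤
      fTail d (cellDist d L N x₀) := by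
  have : Nonempty (Fin d) := ⟨⟨0, hd⟩⟩
  rw [fTail_eq_setIntegral_compl_closedBall d (T := cellDist d L N x₀) infDist_nonneg]
  exact setIntegral_comp_sub_le_of_le_dist volume
    (integrable_one_div_one_add_norm_pow volume (by simp)) (fun t => by positivity) x₀
    fun y hy => cellDist_le_dist hy

end Cells

/-- There is a constant `C`, depending only on `d`, such that for all `n`, all partition
parameters `N₂ ≥ 1`, and all `x₁, x₂` in the cube `[0, n^{1/d}]^d`,
`∫_{ℝ^d} 1/(1+|x₁−x|^{d+1}) ⋅ 1/(1+|x₂−x|^{d+1}) 1_{C(x)≠C(x₁)} 1_{C(x)≠C(x₂)} dx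
  ≤ C f(D_Δ(x₁,x₂)) / (1+|x₁−x₂|^{d+1})`. -/
theorem truncated_convolution_bound (d : ℕ) (hd : 0 < d) :
    ∃ C : ℝ, ∀ (n N : ℕ), 1 ≤ n → 1 ≤ N →
      ∀ x₁ ∈ Set.Icc (0 : Fin d → ℝ) (fun _ => (n : ℝ) ^ ((d : ℝ)⁻¹)),
      ∀ x₂ ∈ Set.Icc (0 : Fin d → ℝ) (fun _ => (n : ℝ) ^ ((d : ℝ)⁻¹)),
        ∫ x : Fin d → ℝ,
            (1 / (1 + ‖x₁ - x‖ ^ (d + 1))) * (1 / (1 + ‖x₂ - x‖ ^ (d + 1))) *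
              (if sameCell d ((n : ℝ) ^ ((d : ℝ)⁻¹)) N x x₁ then 0 else 1) *
              (if sameCell d ((n : ℝ) ^ ((d : ℝ)⁻¹)) N x x₂ then 0 else 1)
          ≤ C * fTail d (min (cellDist d ((n : ℝ) ^ ((d : ℝ)⁻¹)) N x₁)
                (cellDist d ((n : ℝ) ^ ((d : ℝ)⁻¹)) N x₂)) *
              (1 / (1 + ‖x₁ - x₂‖ ^ (d + 1))) := by
  refine ⟨2 ^ (d + 2), fun n N _ _ x₁ _ x₂ _ => ?_⟩
  set L : ℝ := (n : ℝ) ^ ((d : ℝ)⁻¹)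
  set T := min (cellDist d L N x₁) (cellDist d L N x₂)
  set k : (Fin d → ℝ) → ℝ := fun t => 1 / (1 + ‖t‖ ^ (d + 1))
  set u : (Fin d → ℝ) → (Fin d → ℝ) → ℝ := fun x₀ =>
    {x | ¬ sameCell d L N x x₀}.indicator fun x => k (x₀ - x)
  have hu_nonneg : ∀ x₀, 0 ≤ u x₀ := fun x₀ x => Set.indicator_nonneg (fun _ _ => by positivity) x
  have hS : ∀ x₀, MeasurableSet {x | ¬ sameCell d L N x x₀} := fun x₀ =>
    (measurableSet_sameCell x₀).compl
  have hu_int : ∀ x₀, Integrable (u x₀) := fun x₀ =>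
    ((integrable_one_div_one_add_norm_pow volume (by simp)).comp_sub_left x₀).indicator (hS x₀)
  have hu_le : ∀ x₀, ∫ x, u x₀ x ≤ fTail d (cellDist d L N x₀) := fun x₀ =>
    (integral_indicator (hS x₀)).trans_le (setIntegral_not_sameCell_le_fTail hd x₀)
  have hu_min : ∀ x, min (u x₁ x) (u x₂ x) ≤ 2 ^ (d + 1) * k (x₁ - x₂) := fun x =>
    (min_le_min (Set.indicator_le_self' (fun _ _ => by positivity) x)
      (Set.indicator_le_self' (fun _ _ => by positivity) x)).trans
      (min_one_div_one_add_norm_pow_le x₁ x₂ x (d + 1))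
  calc _ = ∫ x, u x₁ x * u x₂ x := by
        congr 1 with x
        by_cases h₁ : sameCell d L N x x₁ <;> by_cases h₂ : sameCell d L N x x₂ <;>
          simp [u, k, h₁, h₂]
    _ ≤ 2 ^ (d + 1) * k (x₁ - x₂) * ((∫ x, u x₁ x) + ∫ x, u x₂ x) :=
        integral_mul_le_mul_integral_add_of_min_le (hu_int x₁) (hu_int x₂)
          (hu_nonneg x₁) (hu_nonneg x₂) hu_min
    _ ≤ 2 ^ (d + 1) * k (x₁ - x₂) * (fTail d T + fTail d T) := by
        gcongr
        · exact (hu_le x₁).trans (fTail_antitone d (min_le_left _ _))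
        · exact (hu_le x₂).trans (fTail_antitone d (min_le_right _ _))
    _ = _ := by ring
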